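/- arXiv:1511.06102 — 2 statements merged into one kernel-verified Lean document; each statement's English description precedes it below -/
import Mathlib

section
/- Let N ∈ {2,3}, let k ≥ 6 be an even integer, let f be a cusp form of weight k for Γ₀(N), and let ε ∈ {1, −1} be such that N^{−k/2}·z^{−k}·f(−1/(Nz)) = ε·f(z) for all z in the upper half-plane (f is an Atkin–Lehner eigenform with eigenvalue ε). Then the coefficients of the restricted even period polynomial of f satisfy N^{m₁−1}·a_{m₁,m₂}(f) = −ε·N^{(k−2)/2}·a_{m₂,m₁}(f) for every pair (m₁,m₂) ∈ oo(k); equivalently, r_f^{ev,0}(y, Nx) = −N^{(k−2)/2}·ε·r_f^{ev,0}(x,y) as polynomials in x and y. -/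
/-! On the imaginary axis the Atkin–Lehner relation reads `f(i/(Nt)) = ε N^{k/2} (it)^k f(it)`,
so the substitution `t ↦ 1/(Nt)` in the Mellin transform `M(s) = ∫₀^∞ f(it) t^{s-1} dt` gives
`N^s M(s) = ε N^{k/2} i^k M(k - s)`. At `s = m₁` this relates the integrals in `a_{m₁,m₂}` and
`a_{m₂,m₁}`; the binomial coefficients agree by symmetry, and `i^{m₁} i^k = -i^{m₂}` as `m₁` is odd. -/

open Complex MeasureTheory CongruenceSubgroup

noncomputable section

/-- Evaluation of a function on the upper half-plane at a complex number,
extended by `0` off the upper half-plane. -/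
def fval (f : UpperHalfPlane → ℂ) (z : ℂ) : ℂ :=
  if h : 0 < z.im then f ⟨z, h⟩ else 0

/-- The totally odd index set `oo(k)`: pairs of odd integers `≥ 3` summing to `k`. -/
def oo (k : ℕ) : Finset (ℕ × ℕ) :=
  (Finset.range (k + 1) ×ˢ Finset.range (k + 1)).filter
    (fun p => Odd p.1 ∧ Odd p.2 ∧ 3 ≤ p.1 ∧ 3 ≤ p.2 ∧ p.1 + p.2 = k)

/-- The coefficient `a_{m₁,m₂}(f) = C(k-2, m₁-1) ⬝ i^{m₁} ⬝ ∫_0^∞ f(it) t^{m₁-1} dt`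
of `x^{m₂-1} y^{m₁-1}` in the period polynomial of `f` (it only depends on `m₁` and `k`). -/
def periodCoeff (k : ℕ) (f : UpperHalfPlane → ℂ) (m₁ : ℕ) : ℂ :=
  (Nat.choose (k - 2) (m₁ - 1) : ℂ) * I ^ m₁ *
    ∫ t in Set.Ioi (0 : ℝ), fval f (I * t) * (t : ℂ) ^ (m₁ - 1)

/-- No integrability is needed: both sides are the same integral after substitution. -/
theorem cpow_mul_mellin_eq_of_comp_inv {φ : ℝ → ℂ} {c : ℝ} (hc : 0 < c) {C : ℂ} {k : ℕ}
    (h : ∀ t : ℝ, 0 < t → φ (c * t)⁻¹ = C * (t : ℂ) ^ k * φ t) (s : ℂ) :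
    (c : ℂ) ^ s * mellin φ s = C * mellin φ (k - s) := by
  have hinv : mellin (fun t => φ (c * t)⁻¹) (-s) = (c : ℂ) ^ s * mellin φ s := by
    simp_rw [mul_inv, mul_comm c⁻¹]
    rw [mellin_comp_inv (fun u => φ (u * c⁻¹)), neg_neg, mellin_comp_mul_right _ _ (inv_pos.2 hc),
      smul_eq_mul, ofReal_inv, cpow_neg,
      inv_cpow _ _ (by simp [arg_ofReal_of_nonneg hc.le, Real.pi_ne_zero.symm]), inv_inv]
  have hpow : mellin (fun t => φ (c * t)⁻¹) (-s) = C * mellin φ (k - s) := by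
    rw [← neg_add_eq_sub, ← mellin_cpow_smul _ _ (k : ℂ), ← smul_eq_mul, ← mellin_const_smul]
    refine setIntegral_congr_fun measurableSet_Ioi fun t ht => ?_
    simp only [h t ht, cpow_natCast, smul_eq_mul]
    ring
  rw [← hinv, hpow]

theorem fval_I_mul_inv_eq_of_atkinLehner {f : UpperHalfPlane → ℂ} {N : ℝ} (hN : 0 < N) {k : ℕ}
    {ε w : ℂ} (hw : w ≠ 0)
    (hAL : ∀ z : ℂ, 0 < z.im → w⁻¹ * z ^ (-(k : ℤ)) * fval f (-1 / ((N : ℂ) * z)) = ε * fval f z)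
    {t : ℝ} (ht : 0 < t) :
    fval f (I * ((N * t)⁻¹ : ℝ)) = ε * w * I ^ k * (t : ℂ) ^ k * fval f (I * t) := by
  have hz : 0 < (I * t).im := by simpa using ht
  have harg : -1 / ((N : ℂ) * (I * t)) = I * ((N * t)⁻¹ : ℝ) := by
    have : (N : ℂ) * t ≠ 0 := by exact_mod_cast (mul_pos hN ht).ne'
    push_cast
    field_simp
    rw [I_sq]
    ring
  have hzk : (I * t) ^ k ≠ 0 := pow_ne_zero _ (by simpa using ht.ne')
  have hALt := hAL _ hz
  rw [harg, zpow_neg, zpow_natCast] at hALt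
  rw [show ε * w * I ^ k * (t : ℂ) ^ k * fval f (I * t) = w * (I * t) ^ k * (ε * fval f (I * t))
    by ring, ← hALt]
  field_simp

theorem periodCoeff_succ_eq_mellin (k : ℕ) (f : UpperHalfPlane → ℂ) (n : ℕ) :
    periodCoeff k f (n + 1) =
      (Nat.choose (k - 2) n : ℂ) * I ^ (n + 1) * mellin (fun t : ℝ => fval f (I * t)) (n + 1) := by
  rw [periodCoeff, Nat.add_sub_cancel, mellin]
  congr 1
  refine setIntegral_congr_fun measurableSet_Ioi fun t _ => ?_
  rw [add_sub_cancel_right, cpow_natCast, smul_eq_mul, mul_comm]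

theorem pow_mul_periodCoeff_eq_of_mellin {f : UpperHalfPlane → ℂ} {N ε : ℂ} (hN : N ≠ 0)
    {a b : ℕ} (h : N ^ (2 * a + 1) * mellin (fun t : ℝ => fval f (I * t)) ((2 * a : ℕ) + 1) =
      ε * N ^ (a + b + 1) * I ^ (2 * (a + b + 1)) *
        mellin (fun t : ℝ => fval f (I * t)) ((2 * b : ℕ) + 1)) :
    N ^ (2 * a) * periodCoeff (2 * (a + b + 1)) f (2 * a + 1) =
      -ε * N ^ (a + b) * periodCoeff (2 * (a + b + 1)) f (2 * b + 1) := by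
  set M := mellin (fun t : ℝ => fval f (I * t))
  have hchoose : (2 * (a + b + 1) - 2).choose (2 * b) = (2 * (a + b + 1) - 2).choose (2 * a) := by
    rw [show 2 * (a + b + 1) - 2 = 2 * a + 2 * b by omega, Nat.choose_symm_add]
  have hI : I ^ (2 * a + 1) * I ^ (2 * (a + b + 1)) = -I ^ (2 * b + 1) := by
    rw [← pow_add, show 2 * a + 1 + 2 * (a + b + 1) = 2 * (2 * a + 1) + (2 * b + 1) by ring,
      pow_add, pow_mul, I_sq, Odd.neg_one_pow ⟨a, rfl⟩, neg_one_mul]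
  rw [periodCoeff_succ_eq_mellin, periodCoeff_succ_eq_mellin, hchoose]
  refine mul_left_cancel₀ hN ?_
  linear_combination (((2 * (a + b + 1) - 2).choose (2 * a) : ℂ) * I ^ (2 * a + 1)) * h
    + (ε * N ^ (a + b + 1) * ((2 * (a + b + 1) - 2).choose (2 * a) : ℂ) * M ((2 * b : ℕ) + 1)) * hI

theorem stmt7_general (N : ℕ) (hN : N = 2 ∨ N = 3) (k : ℕ)
    (ε : ℂ)
    (f : CuspForm (Gamma0 N) (k : ℤ))
    (hAL : ∀ z : ℂ, 0 < z.im →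
      ((N : ℂ) ^ (k / 2))⁻¹ * z ^ (-(k : ℤ)) * fval f (-1 / ((N : ℂ) * z)) = ε * fval f z) :
    ∀ m ∈ oo k, (N : ℂ) ^ (m.1 - 1) * periodCoeff k f m.1
      = -ε * (N : ℂ) ^ ((k - 2) / 2) * periodCoeff k f m.2 := by
  rintro ⟨_, _⟩ hm
  obtain ⟨-, ⟨a, rfl⟩, ⟨b, rfl⟩, -, -, hk⟩ := Finset.mem_filter.1 hm
  have hN₀ : (0 : ℝ) < N := by rcases hN with rfl | rfl <;> norm_num
  have hNC : (N : ℂ) ≠ 0 := by exact_mod_cast hN₀.ne'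
  have hmellin := cpow_mul_mellin_eq_of_comp_inv (φ := fun t : ℝ => fval f (I * t)) hN₀
    (fun t ht => fval_I_mul_inv_eq_of_atkinLehner hN₀ (pow_ne_zero (k / 2) hNC)
      (by simpa using hAL) ht) ((2 * a : ℕ) + 1)
  obtain rfl : k = 2 * (a + b + 1) := by simp only at hk; omega
  rw [show ((2 * (a + b + 1) : ℕ) : ℂ) - ((2 * a : ℕ) + 1) = (2 * b : ℕ) + 1 by push_cast; ring,
    ← Nat.cast_succ, cpow_natCast, ofReal_natCast, Nat.cast_succ,
    Nat.mul_div_cancel_left _ two_pos] at hmellin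
  rw [Nat.add_sub_cancel, show (2 * (a + b + 1) - 2) / 2 = a + b by omega]
  exact pow_mul_periodCoeff_eq_of_mellin hNC hmellin

/-- Lemma: the restricted even period polynomial of an Atkin–Lehner eigenform `f` of
weight `k` and level `Γ₀(N)` (with eigenvalue `ε`), for `N ∈ {2,3}`, satisfies
`N^{m₁-1} a_{m₁,m₂}(f) = -ε N^{(k-2)/2} a_{m₂,m₁}(f)` for all `(m₁,m₂) ∈ oo(k)`,
i.e. `r_f^{ev,0}(y, Nx) = -N^{(k-2)/2} ε r_f^{ev,0}(x,y)`. -/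
theorem stmt7 (N : ℕ) (hN : N = 2 ∨ N = 3) (k : ℕ) (hk : 6 ≤ k) (hke : Even k)
    (ε : ℂ) (hε : ε = 1 ∨ ε = -1)
    (f : CuspForm (Gamma0 N) (k : ℤ))
    (hAL : ∀ z : ℂ, 0 < z.im →
      ((N : ℂ) ^ (k / 2))⁻¹ * z ^ (-(k : ℤ)) * fval f (-1 / ((N : ℂ) * z)) = ε * fval f z) :
    ∀ m ∈ oo k, (N : ℂ) ^ (m.1 - 1) * periodCoeff k f m.1
      = -ε * (N : ℂ) ^ ((k - 2) / 2) * periodCoeff k f m.2 :=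
  stmt7_general N hN k ε f hAL
end
end

section
/- Let p(x,y) be a polynomial in two variables over ℂ such that every monomial x^a·y^b appearing in p has both exponents a and b even. Then every monomial x^a·y^b appearing in the polynomial p(3x, x+y) − p(3x, x−y) has both exponents a and b odd; equivalently, 2·p(3x, x+y) ≡ p(3x, x+y) + p(3x, x−y) modulo the span of monomials x^{odd}·y^{odd}. Likewise, every monomial appearing in p(x+y, 3y) − p(x−y, 3y) has both exponents odd. -/
/-!
Since all exponents of `p` are even, `p` is fixed by every sign change `X i ↦ ±X i`.
Put `q = p(3x, x+y)` (resp. `q = p(x+y, 3y)`). The substituted forms are linear, so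
`q(-x, -y) = p(-3x, -x-y) = q`: every monomial of `q` has even total degree. The second
polynomial is `q(x, -y)` (for `p(x-y, -3y) = p(x-y, 3y)` in the second case), and
`q - q(x, -y)` keeps exactly the monomials of `q` of odd degree in `y`, whose degree in `x`
is then odd as well.
-/

open MvPolynomial

noncomputable section

/-- A two-variable polynomial lies in the span of monomials `x^odd ⬝ y^odd`
if every monomial appearing in it has odd degree in each variable. -/
def TotallyOdd (q : MvPolynomial (Fin 2) ℂ) : Prop :=
  ∀ d ∈ q.support, Odd (d 0) ∧ Odd (d 1)

namespace MvPolynomial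

variable {σ R : Type*} [CommSemiring R]

def scale (c : σ → R) : MvPolynomial σ R →ₐ[R] MvPolynomial σ R :=
  bind₁ fun i => C (c i) * X i

@[simp]
lemma scale_X (c : σ → R) (i : σ) : scale c (X i) = C (c i) * X i :=
  bind₁_X_right _ _

lemma scale_monomial (c : σ → R) (d : σ →₀ ℕ) (a : R) :
    scale c (monomial d a) = monomial d ((d.prod fun i k => c i ^ k) * a) := by
  rw [scale, bind₁_monomial, monomial_eq]
  simp only [Finsupp.prod, mul_pow, Finset.prod_mul_distrib, ← C_pow, ← map_prod, C_mul]
  ring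

lemma coeff_scale (c : σ → R) (q : MvPolynomial σ R) (d : σ →₀ ℕ) :
    coeff d (scale c q) = (d.prod fun i k => c i ^ k) * coeff d q := by
  classical
  induction q using MvPolynomial.induction_on' with
  | monomial e a =>
    rw [scale_monomial, coeff_monomial, coeff_monomial]
    split_ifs with h
    · rw [h]
    · rw [mul_zero]
  | add q r hq hr => rw [map_add, coeff_add, coeff_add, hq, hr, mul_add]

lemma scale_eq_self_of_even {c : σ → R} (hc : ∀ i, c i ^ 2 = 1) {p : MvPolynomial σ R}
    (hp : ∀ d ∈ p.support, ∀ i, Even (d i)) : scale c p = p := by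
  ext d
  rw [coeff_scale]
  by_cases hd : d ∈ p.support
  · suffices (d.prod fun i k => c i ^ k) = 1 by rw [this, one_mul]
    refine Finset.prod_eq_one fun i _ => ?_
    obtain ⟨k, hk⟩ := (hp d hd i).exists_two_nsmul
    dsimp only
    rw [hk, smul_eq_mul, pow_mul, hc, one_pow]
  · rw [notMem_support_iff.mp hd, mul_zero]

lemma bind₁_C_mul (c : σ → R) (f : σ → MvPolynomial σ R) (p : MvPolynomial σ R) :
    bind₁ (fun i => C (c i) * f i) p = bind₁ f (scale c p) := by
  rw [scale, bind₁_bind₁]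
  simp

lemma scale_bind₁ {c c' : σ → R} {f g : σ → MvPolynomial σ R}
    (h : ∀ i, scale c (f i) = C (c' i) * g i) (p : MvPolynomial σ R) :
    scale c (bind₁ f p) = bind₁ g (scale c' p) := by
  rw [scale, bind₁_bind₁, ← bind₁_C_mul]
  exact congrArg (bind₁ · p) (_root_.funext h)

end MvPolynomial

lemma coeff_scale_fin_two (c : Fin 2 → ℂ) (q : MvPolynomial (Fin 2) ℂ) (d : Fin 2 →₀ ℕ) :
    coeff d (scale c q) = c 0 ^ d 0 * c 1 ^ d 1 * coeff d q := by
  rw [coeff_scale, Finsupp.prod_fintype _ _ fun _ => pow_zero _, Fin.prod_univ_two]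

lemma totallyOdd_sub_scale {q : MvPolynomial (Fin 2) ℂ} (hq : scale (fun _ => -1) q = q) :
    TotallyOdd (q - scale ![1, -1] q) := by
  intro d hd
  have hd' : (1 - (-1) ^ d 1) * coeff d q ≠ 0 := by
    rwa [mem_support_iff, coeff_sub, coeff_scale_fin_two, Matrix.cons_val_zero,
      Matrix.cons_val_one, one_pow, one_mul, ← one_sub_mul] at hd
  obtain ⟨hsign, hcoeff⟩ := mul_ne_zero_iff.mp hd'
  have hodd : Odd (d 1) := by
    rw [← Nat.not_even_iff_odd, ← neg_one_pow_eq_one_iff_even (R := ℂ) (by norm_num)]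
    exact fun h => hsign (by rw [h, sub_self])
  have heven : Even (d 0 + d 1) := by
    have h := congrArg (coeff d) hq
    rw [coeff_scale_fin_two, ← pow_add] at h
    rw [← neg_one_pow_eq_one_iff_even (R := ℂ) (by norm_num)]
    exact mul_right_cancel₀ hcoeff (h.trans (one_mul _).symm)
  exact ⟨by grind, hodd⟩

lemma totallyOdd_bind₁_sub_bind₁ {p : MvPolynomial (Fin 2) ℂ}
    (hp : ∀ d ∈ p.support, ∀ i, Even (d i)) {f g : Fin 2 → MvPolynomial (Fin 2) ℂ}
    {c : Fin 2 → ℂ} (hc : ∀ i, c i ^ 2 = 1)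
    (hf : ∀ i, scale (fun _ => -1) (f i) = -f i)
    (hfg : ∀ i, scale ![1, -1] (f i) = C (c i) * g i) :
    TotallyOdd (bind₁ f p - bind₁ g p) := by
  have hsym : scale (fun _ => -1) (bind₁ f p) = bind₁ f p := by
    have hf' : ∀ i, scale (fun _ => -1) (f i) = C (-1) * f i := fun i => by
      rw [hf, map_neg, map_one, neg_one_mul]
    rw [scale_bind₁ hf', scale_eq_self_of_even (fun _ => by norm_num) hp]
  have hflip : scale ![1, -1] (bind₁ f p) = bind₁ g p := by
    rw [scale_bind₁ hfg, scale_eq_self_of_even hc hp]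
  exact hflip ▸ totallyOdd_sub_scale hsym

/-- If every monomial of `p(x,y)` has both exponents even, then every monomial of
`p(3x, x+y) - p(3x, x-y)` has both exponents odd, and likewise for
`p(x+y, 3y) - p(x-y, 3y)`. -/
theorem stmt9 (p : MvPolynomial (Fin 2) ℂ)
    (hp : ∀ d ∈ p.support, Even (d 0) ∧ Even (d 1)) :
    TotallyOdd (bind₁ ![3 * X 0, X 0 + X 1] p - bind₁ ![3 * X 0, X 0 - X 1] p) ∧
    TotallyOdd (bind₁ ![X 0 + X 1, 3 * X 1] p - bind₁ ![X 0 - X 1, 3 * X 1] p) := by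
  have hp' : ∀ d ∈ p.support, ∀ i, Even (d i) := fun d hd => Fin.forall_fin_two.2 (hp d hd)
  constructor
  · refine totallyOdd_bind₁_sub_bind₁ hp' (c := 1) (fun _ => one_pow _) ?_ ?_ <;>
      intro i <;> fin_cases i <;> simp [map_ofNat] <;> ring
  · refine totallyOdd_bind₁_sub_bind₁ hp' (c := ![1, -1]) ?_ ?_ ?_ <;>
      intro i <;> fin_cases i <;> simp [map_ofNat] <;> ring
end
end
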